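/- Let 0 < α < 1, let f ∈ L¹(a,b) be continuous with I^{1-α}_{a+}f absolutely continuous and (I^{1-α}_{a+}f)(a) = 0 (so that I^α_{a+} D^α_{a+} f = f), and suppose D^α_{a+}f is continuous on [a,b]. If f(x) = 0 for some x ∈ (a,b], then there exists ξ ∈ (a,x] with D^α_{a+} f(ξ) = 0. -/

import Mathlib

/-!
Apply `I^α_{a+}` to `D^α_{a+} f`: the representation gives
`∫_a^x D^α f(t) (x - t)^(α-1) dt = Γ(α) f(x) = 0`. The kernel `(x - t)^(α-1)` is positive on
`(a, x)`, so a continuous `D^α f` without zeros on `(a, x]` would have constant sign there by the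
intermediate value theorem, making the integral nonzero.
-/

open Set MeasureTheory

lemma intervalIntegrable_sub_rpow {α : ℝ} (hα : 0 < α) (a x : ℝ) :
    IntervalIntegrable (fun t => (x - t) ^ (α - 1)) volume a x := by
  simpa using (intervalIntegral.intervalIntegrable_rpow' (r := α - 1) (a := x - a) (b := x - x)
    (by linarith)).comp_sub_left x

section WeightedIntegral

variable {g w : ℝ → ℝ} {a x : ℝ}

lemma ContinuousOn.pos_on_Ioc_of_ne_zero (hg : ContinuousOn g (Icc a x))
    (hne : ∀ t ∈ Ioc a x, g t ≠ 0) (hx : 0 < g x) : ∀ t ∈ Ioc a x, 0 < g t := by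
  intro t ht
  by_contra! hgt
  obtain ⟨ξ, hξ, hgξ⟩ : (0 : ℝ) ∈ g '' Icc t x :=
    intermediate_value_Icc ht.2 (hg.mono (Icc_subset_Icc_left ht.1.le)) ⟨hgt, hx.le⟩
  exact hne ξ ⟨ht.1.trans_le hξ.1, hξ.2⟩ hgξ

lemma intervalIntegral_mul_pos_of_ne_zero (hax : a < x) (hg : ContinuousOn g (Icc a x))
    (hne : ∀ t ∈ Ioc a x, g t ≠ 0) (hx : 0 < g x) (hw : ∀ t ∈ Ioo a x, 0 < w t)
    (hgw : IntervalIntegrable (fun t => g t * w t) volume a x) :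
    0 < ∫ t in a..x, g t * w t :=
  intervalIntegral.intervalIntegral_pos_of_pos_on hgw
    (fun t ht => mul_pos (hg.pos_on_Ioc_of_ne_zero hne hx t (Ioo_subset_Ioc_self ht)) (hw t ht))
    hax

theorem exists_mem_Ioc_eq_zero_of_intervalIntegral_mul_eq_zero (hax : a < x)
    (hg : ContinuousOn g (Icc a x)) (hw : ∀ t ∈ Ioo a x, 0 < w t)
    (hgw : IntervalIntegrable (fun t => g t * w t) volume a x)
    (hzero : ∫ t in a..x, g t * w t = 0) : ∃ ξ ∈ Ioc a x, g ξ = 0 := by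
  by_contra! hne
  rcases (hne x ⟨hax, le_rfl⟩).lt_or_gt with hneg | hpos
  · have hpos' : 0 < ∫ t in a..x, -g t * w t :=
      intervalIntegral_mul_pos_of_ne_zero hax hg.neg (fun t ht => neg_ne_zero.mpr (hne t ht))
        (neg_pos.mpr hneg) hw (by simpa only [neg_mul, Pi.neg_def] using hgw.neg)
    simp only [neg_mul, intervalIntegral.integral_neg, hzero, neg_zero] at hpos'
    exact hpos'.false
  · exact (intervalIntegral_mul_pos_of_ne_zero hax hg hne hpos hw hgw).ne' hzero

end WeightedIntegral

theorem fractional_critical_point_exists_general (a b α : ℝ)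
    (hα : α ∈ Set.Ioo (0:ℝ) 1) (f : ℝ → ℝ) :
    let Df : ℝ → ℝ :=
      fun x => deriv (fun y => (1 / Real.Gamma (1 - α)) * ∫ t in a..y, f t * (y - t) ^ (-α)) x
    ContinuousOn Df (Set.Icc a b) →
    (∀ y ∈ Set.Ioc a b,
      (1 / Real.Gamma α) * (∫ t in a..y, Df t * (y - t) ^ (α - 1)) = f y) →
    ∀ x ∈ Set.Ioc a b, f x = 0 → ∃ ξ ∈ Set.Ioc a x, Df ξ = 0 := by
  intro Df hDf hrep x hx hfx
  have hDfx : ContinuousOn Df (Icc a x) := hDf.mono (Icc_subset_Icc_right hx.2)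
  have hzero : ∫ t in a..x, Df t * (x - t) ^ (α - 1) = 0 := by
    have hΓ : Real.Gamma α ≠ 0 := (Real.Gamma_pos_of_pos hα.1).ne'
    simpa [hfx, hΓ] using hrep x hx
  refine exists_mem_Ioc_eq_zero_of_intervalIntegral_mul_eq_zero hx.1 hDfx
    (fun t ht => Real.rpow_pos_of_pos (sub_pos.mpr ht.2) _) ?_ hzero
  exact (intervalIntegrable_sub_rpow hα.1 a x).continuousOn_mul (by rwa [uIcc_of_le hx.1.le])

/-- Existence of a fractional critical point: if `I^α_{a+} D^α_{a+} f = f` on `(a,b]`,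
`D^α_{a+} f` is continuous, and `f x = 0` for some `x ∈ (a,b]`, then `D^α_{a+} f` has
a root `ξ ∈ (a,x]`. -/
theorem fractional_critical_point_exists (a b α : ℝ) (hab : a < b)
    (hα : α ∈ Set.Ioo (0:ℝ) 1) (f : ℝ → ℝ) (hf : ContinuousOn f (Set.Icc a b)) :
    let Df : ℝ → ℝ :=
      fun x => deriv (fun y => (1 / Real.Gamma (1 - α)) * ∫ t in a..y, f t * (y - t) ^ (-α)) x
    ContinuousOn Df (Set.Icc a b) →
    (∀ y ∈ Set.Ioc a b,
      (1 / Real.Gamma α) * (∫ t in a..y, Df t * (y - t) ^ (α - 1)) = f y) →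
    ∀ x ∈ Set.Ioc a b, f x = 0 → ∃ ξ ∈ Set.Ioc a x, Df ξ = 0 :=
  fractional_critical_point_exists_general a b α hα f
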